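/- If A is an e*-open subset of a topological space X, then e*-cl(A) = e*-cl_θ(A), where e*-cl_θ(A) is the set of points x such that e*-cl(U) ∩ A ≠ ∅ for every e*-open set U containing x. -/

import Mathlib

open Set Topology

variable {X : Type*} [TopologicalSpace X]

/-- δ-closure of A. -/
def deltaCl (A : Set X) : Set X :=
  {x | ∀ U : Set X, IsOpen U → x ∈ U → (interior (closure U) ∩ A).Nonempty}

/-- A is e*-open if A ⊆ cl(int(δ-cl A)). -/
def EStarOpen (A : Set X) : Prop := A ⊆ closure (interior (deltaCl A))

/-- A is e*-closed if its complement is e*-open. -/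
def EStarClosed (A : Set X) : Prop := EStarOpen Aᶜ

/-- e*-closure: intersection of all e*-closed supersets. -/
def eStarCl (A : Set X) : Set X := ⋂₀ {F | EStarClosed F ∧ A ⊆ F}

/-- e*-interior: union of all e*-open subsets. -/
def eStarInt (A : Set X) : Set X := ⋃₀ {U | EStarOpen U ∧ U ⊆ A}

/-- e*-regular: both e*-open and e*-closed. -/
def EStarRegular (A : Set X) : Prop := EStarOpen A ∧ EStarClosed A

/-- e*-θ-closure. -/
def eStarClTheta (A : Set X) : Set X :=
  {x | ∀ U : Set X, EStarOpen U → x ∈ U → (eStarCl U ∩ A).Nonempty}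

/-- e*-θ-closed. -/
def EStarThetaClosed (A : Set X) : Prop := A = eStarClTheta A

/-- e*-θ-open. -/
def EStarThetaOpen (A : Set X) : Prop := EStarThetaClosed Aᶜ

/-- quasi e*-θ-closed. -/
def QEStarThetaClosed (A : Set X) : Prop :=
  ∀ U : Set X, EStarThetaOpen U → A ⊆ U → eStarClTheta A ⊆ U

/-- e*-θ-kernel. -/
def eStarKerTheta (A : Set X) : Set X := ⋂₀ {U | EStarThetaOpen U ∧ A ⊆ U}

theorem eStarClosed_compl_iff {A : Set X} : EStarClosed Aᶜ ↔ EStarOpen A := by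
  rw [EStarClosed, compl_compl]

theorem subset_eStarCl (A : Set X) : A ⊆ eStarCl A :=
  fun _ hx => mem_sInter.2 fun _ hF => hF.2 hx

theorem eStarCl_subset {A F : Set X} (hF : EStarClosed F) (hAF : A ⊆ F) : eStarCl A ⊆ F :=
  sInter_subset_of_mem ⟨hF, hAF⟩

theorem EStarOpen.disjoint_eStarCl {A U : Set X} (hA : EStarOpen A) (hUA : Disjoint U A) :
    Disjoint (eStarCl U) A :=
  subset_compl_iff_disjoint_right.1 <|
    eStarCl_subset (eStarClosed_compl_iff.2 hA) hUA.subset_compl_right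

theorem eStarCl_subset_eStarClTheta (A : Set X) : eStarCl A ⊆ eStarClTheta A := by
  intro x hx U hU hxU
  refine not_disjoint_iff_nonempty_inter.1 fun hdisj => ?_
  have hUA : Disjoint U A := hdisj.mono_left (subset_eStarCl U)
  exact eStarCl_subset (eStarClosed_compl_iff.2 hU) hUA.subset_compl_left hx hxU

theorem eStarClTheta_subset_eStarCl {A : Set X} (hA : EStarOpen A) :
    eStarClTheta A ⊆ eStarCl A := by
  intro x hx F ⟨hF, hAF⟩
  by_contra hxF
  obtain ⟨y, hyF, hyA⟩ := hx Fᶜ hF hxF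
  exact disjoint_left.1 (hA.disjoint_eStarCl (disjoint_compl_left_iff_subset.2 hAF)) hyF hyA

theorem stmt2 (A : Set X) (h : EStarOpen A) : eStarCl A = eStarClTheta A :=
  (eStarCl_subset_eStarClTheta A).antisymm (eStarClTheta_subset_eStarCl h)
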